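/- For a finite group G and n ≥ 2, the probability that an n-tuple of elements of G pairwise commute equals c_G(n-1)/|G|^{n-1}, where c_G(m) is the number of simultaneous conjugacy classes of pairwise-commuting m-tuples in G. -/

import Mathlib

/-- `cp G n` : the probability that a random `n`-tuple of elements of `G` pairwise commutes. -/
noncomputable def cp (G : Type*) [Group G] (n : ℕ) : ℚ :=
  (Nat.card {v : Fin n → G // ∀ i j, Commute (v i) (v j)} : ℚ) / (Nat.card G : ℚ) ^ n

/-- The equivalence relation of simultaneous conjugacy on pairwise-commuting `n`-tuples. -/
def simSetoid (G : Type*) [Group G] (n : ℕ) :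
    Setoid {v : Fin n → G // ∀ i j, Commute (v i) (v j)} where
  r v w := ∃ x : G, ∀ i, x * v.1 i * x⁻¹ = w.1 i
  iseqv := by
    constructor
    · intro v; exact ⟨1, fun i => by group⟩
    · rintro v w ⟨x, h⟩; exact ⟨x⁻¹, fun i => by rw [← h i]; group⟩
    · rintro u v w ⟨x, h⟩ ⟨y, h'⟩; exact ⟨y * x, fun i => by rw [← h' i, ← h i]; group⟩

/-- `cc G n` : the number of simultaneous conjugacy classes of pairwise-commuting
`n`-tuples of elements of `G`. -/
noncomputable def cc (G : Type*) [Group G] (n : ℕ) : ℕ :=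
  Nat.card (Quotient (simSetoid G n))

/-- Auxiliary: the type of pairwise-commuting `m`-tuples, as a separate definition so we can
put a `MulAction` instance on it. -/
def CommTuples (G : Type*) [Group G] (m : ℕ) := {v : Fin m → G // ∀ i j, Commute (v i) (v j)}

noncomputable instance commTuplesFintype (G : Type*) [Group G] [Fintype G] (m : ℕ) :
    Fintype (CommTuples G m) := by
  classical exact Subtype.fintype _

instance commTuplesMulAction (G : Type*) [Group G] (m : ℕ) : MulAction G (CommTuples G m) where
  smul g v := ⟨fun i => g * v.1 i * g⁻¹, fun i j => by
    simpa using ((v.2 i j).map (MulAut.conj g).toMonoidHom)⟩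
  one_smul v := Subtype.ext <| funext fun i => by
    show 1 * v.1 i * 1⁻¹ = v.1 i; group
  mul_smul g h v := Subtype.ext <| funext fun i => by
    show (g * h) * v.1 i * (g * h)⁻¹ = g * (h * v.1 i * h⁻¹) * g⁻¹
    group

lemma commTuples_smul_apply {G : Type*} [Group G] {m : ℕ} (g : G) (v : CommTuples G m)
    (i : Fin m) : (g • v).1 i = g * v.1 i * g⁻¹ := rfl

/-- Splitting off the head of a commuting `(m+1)`-tuple gives a group element together with a
commuting `m`-tuple fixed by conjugation by that element. -/
def consEquiv (G : Type*) [Group G] (m : ℕ) :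
    {v : Fin (m + 1) → G // ∀ i j, Commute (v i) (v j)} ≃
      Σ g : G, MulAction.fixedBy (CommTuples G m) g where
  toFun v := ⟨v.1 0, ⟨fun i => v.1 i.succ, fun i j => v.2 i.succ j.succ⟩, by
    refine Subtype.ext (funext fun i => ?_)
    show v.1 0 * v.1 i.succ * (v.1 0)⁻¹ = v.1 i.succ
    rw [(v.2 0 i.succ).eq]; group⟩
  invFun p := ⟨Fin.cons p.1 p.2.1.1, by
    intro i j
    have key : ∀ k, p.1 * p.2.1.1 k = p.2.1.1 k * p.1 := by
      intro k
      have h := congrFun (congrArg Subtype.val p.2.2) k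
      rw [commTuples_smul_apply] at h
      exact mul_inv_eq_iff_eq_mul.mp h
    refine Fin.cases ?_ (fun i' => ?_) i <;> refine Fin.cases ?_ (fun j' => ?_) j
    · simp
    · simpa using (show Commute p.1 (p.2.1.1 j') from key j')
    · simpa using (show Commute (p.2.1.1 i') p.1 from (key i').symm)
    · simpa using p.2.1.2 i' j'⟩
  left_inv v := Subtype.ext (Fin.cons_self_tail v.1)
  right_inv p := by
    refine Sigma.ext rfl (heq_of_eq (Subtype.ext (Subtype.ext (funext fun i => ?_))))
    rfl

/-- The quotient by simultaneous conjugacy agrees with the quotient by the orbit relation. -/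
def quotientEquiv (G : Type*) [Group G] (m : ℕ) :
    Quotient (MulAction.orbitRel G (CommTuples G m)) ≃ Quotient (simSetoid G m) :=
  Quotient.congr (Equiv.refl _) (by
    intro v w
    rw [MulAction.orbitRel_apply, MulAction.mem_orbit_iff]
    constructor
    · rintro ⟨g, rfl⟩
      exact (simSetoid G m).symm ⟨g, fun i => rfl⟩
    · rintro ⟨x, h⟩
      exact ⟨x⁻¹, Subtype.ext (funext fun i => by
        have h' : x * v.1 i * x⁻¹ = w.1 i := h i
        rw [commTuples_smul_apply, ← h']; group)⟩)

lemma card_key (G : Type*) [Group G] [Fintype G] (m : ℕ) :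
    Nat.card {v : Fin (m + 1) → G // ∀ i j, Commute (v i) (v j)} = cc G m * Nat.card G := by
  classical
  have h1 : Nat.card {v : Fin (m + 1) → G // ∀ i j, Commute (v i) (v j)} =
      ∑ g : G, Fintype.card (MulAction.fixedBy (CommTuples G m) g) := by
    rw [Nat.card_congr (consEquiv G m), Nat.card_eq_fintype_card, Fintype.card_sigma]
  rw [h1, MulAction.sum_card_fixedBy_eq_card_orbits_mul_card_group]
  rw [cc, ← Nat.card_congr (quotientEquiv G m), Nat.card_eq_fintype_card,
    Nat.card_eq_fintype_card]

theorem cp_eq_cc_div_card_pow (G : Type*) [Group G] [Fintype G] (n : ℕ) (hn : 2 ≤ n) :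
    cp G n = (cc G (n - 1) : ℚ) / (Nat.card G : ℚ) ^ (n - 1) := by
  obtain ⟨m, rfl⟩ : ∃ m, n = m + 1 := ⟨n - 1, (Nat.succ_pred_eq_of_pos (by omega)).symm⟩
  have hG : (Nat.card G : ℚ) ≠ 0 := by
    simp [Nat.card_eq_fintype_card, Fintype.card_ne_zero]
  rw [cp, card_key G m]
  push_cast
  field_simp
  ring
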